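/- For tuples J = (j₁,…,j_s) of positive integers, define m_J := ∏_{k=1}^{s} [1/(j_k + j_{k+1} + ⋯ + j_s + 1)]·[1/(j_k − 1)!] and n_J := Σ_{J = J₁||⋯||J_l} (−1)^l m_{J₁}⋯m_{J_l}, summing over all ways to write J as a concatenation of nonempty tuples. Then n_{(1,…,1)} (k ones) equals B_k/k!, where B_k is the k-th Bernoulli number with B_1 = −1/2. -/

import Mathlib

/- STATEMENT 10: For tuples J = (j₁,…,j_s) of positive integers, with
m_J := ∏_k 1/(j_k + ⋯ + j_s + 1) · 1/(j_k − 1)! and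
n_J := Σ_{J = J₁||⋯||J_l} (−1)^l m_{J₁}⋯m_{J_l} (over all factorizations of J into
concatenations of nonempty tuples), one has n_{(1,…,1)} (k ones) = B_k/k!. -/

/-- `m_J = ∏_{k=1}^{s} [1/(j_k + ⋯ + j_s + 1)]·[1/(j_k − 1)!]`. -/
def mCoeff : List ℕ → ℚ
  | [] => 1
  | j :: rest => (((j :: rest).sum + 1 : ℕ) : ℚ)⁻¹ * ((j - 1).factorial : ℚ)⁻¹ * mCoeff rest

/-- `n_J = Σ_{J = J₁||⋯||J_l} (−1)^l m_{J₁}⋯m_{J_l}`, computed recursively over the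
first block of a factorization: `nCoeff [] = 1` and for `J ≠ []`,
`nCoeff J = Σ_{∅ ≠ J₁ prefix of J} (−m_{J₁}) · nCoeff (J minus J₁)`. -/
def nCoeff : List ℕ → ℚ
  | [] => 1
  | j :: rest =>
      ∑ k ∈ Finset.range (rest.length + 1),
        (-(mCoeff ((j :: rest).take (k + 1)))) * nCoeff (rest.drop k)
termination_by J => J.length
decreasing_by
  simp only [List.length_drop, List.length_cons]
  omega


/-! Stripping off a first block of length `j + 1` from `(1,…,1)` leaves a tuple of ones again,
and `m` of `s` ones is `1/(s+1)!`. Hence `a_k := n_{(1,…,1)}` satisfies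
`a_{k+1} = -∑_{i+j=k} a_i/(j+2)!`, i.e. `(∑ a_k tᵏ) · (eᵗ - 1)/t = 1`, which is the
recursion `bernoulli_spec'` characterizing `B_k/k!`. -/

open Finset Nat

lemma mCoeff_replicate_one (s : ℕ) : mCoeff (List.replicate s 1) = ((s + 1)! : ℚ)⁻¹ := by
  induction s with
  | zero => simp [mCoeff]
  | succ s ih =>
    rw [List.replicate_succ, mCoeff, ← List.replicate_succ, ih, List.sum_replicate,
      factorial_succ (s + 1)]
    simp [mul_comm]

lemma nCoeff_replicate_one_succ (k : ℕ) :
    nCoeff (List.replicate (k + 1) 1) =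
      -∑ p ∈ antidiagonal k, nCoeff (List.replicate p.1 1) / (p.2 + 2)! := by
  rw [List.replicate_succ, nCoeff, List.length_replicate, ← sum_antidiagonal_swap]
  simp only [Prod.fst_swap, Prod.snd_swap]
  rw [sum_antidiagonal_eq_sum_range_succ (fun i j => nCoeff (List.replicate j 1) / (i + 2)!),
    ← sum_neg_distrib]
  refine sum_congr rfl fun i hi => ?_
  rw [← List.replicate_succ, List.take_replicate, List.drop_replicate,
    min_eq_left (mem_range.mp hi), mCoeff_replicate_one]
  simp [div_eq_inv_mul]

lemma sum_antidiagonal_bernoulli_div_factorial (n : ℕ) :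
    ∑ p ∈ antidiagonal n, bernoulli p.1 / p.1 ! / (p.2 + 1)! = if n = 0 then 1 else 0 := by
  have hterm : ∀ p ∈ antidiagonal n, bernoulli p.1 / p.1 ! / (p.2 + 1)! =
      (n ! : ℚ)⁻¹ * (((p.1 + p.2).choose p.2 : ℚ) / (p.2 + 1) * bernoulli p.1) := by
    rintro ⟨i, j⟩ hp
    obtain rfl : i + j = n := HasAntidiagonal.mem_antidiagonal.mp hp
    rw [cast_choose ℚ (le_add_left j i), Nat.add_sub_cancel, factorial_succ]
    push_cast
    field_simp
  rw [sum_congr rfl hterm, ← mul_sum, bernoulli_spec']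
  split_ifs with hn <;> simp [hn]

lemma bernoulli_succ_div_factorial (k : ℕ) :
    bernoulli (k + 1) / (k + 1)! =
      -∑ p ∈ antidiagonal k, bernoulli p.1 / p.1 ! / (p.2 + 2)! := by
  have h := sum_antidiagonal_bernoulli_div_factorial (k + 1)
  rw [sum_antidiagonal_succ', if_neg k.succ_ne_zero] at h
  simpa [eq_neg_iff_add_eq_zero] using h

theorem n_ones_eq_bernoulli_div_factorial :
    ∀ k : ℕ, 1 ≤ k →
      nCoeff (List.replicate k 1) = bernoulli k / (k.factorial : ℚ) := by
  rintro k -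
  induction k using Nat.strong_induction_on with
  | _ k ih =>
    cases k with
    | zero => simp [nCoeff]
    | succ k =>
      rw [nCoeff_replicate_one_succ, bernoulli_succ_div_factorial]
      congr 1
      refine sum_congr rfl fun p hp => ?_
      rw [ih p.1 (Nat.antidiagonal.fst_lt hp)]
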